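/- Convergence of the scaled hitting-time density: fix a>0, r∈ℝ, β>0, σ>0, σ_A>0 and define, for N≥2 and t>0, g_N(t) = ((1−λ(a))f_N(a) − r)/(√(2π)·σ·t^{3/2}) · exp(−((1−λ(a))f_N(a) − r + (1−λ(a))βt)²/(2σ²t)). Then for every k∈ℝ, N·√(log N)·g_N(T_N(a,k)) converges, as N→∞, to β²·exp( β·(8a²β²r − β³k²σ√(2aβ+σ²) + 8aβrσ² + 2rσ⁴)/(σ·(2aβ+σ²)^{5/2}) ) / (√π·(2aβ+σ²)). -/

import Mathlib

/-!
Put `x = √(log N)`. The barrier `(1 - λ(a)) f_N(a) = c x²` and the time `T_N(a,k) = (c/μ) x² + k x`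
are quadratic in `x`, where `μ = (1 - λ(a)) β` is the drift (`c`, `μ` are `barrierCoeff`,
`driftCoeff` below). In the exponent of the first-passage
density the `x²`-terms add up to `-2cμx²/σ² = -x²`, which cancels the factor `N = e^{x²}`; what
remains of `N x g_N(T_N)` is a function of `1/x` that is continuous at `0`, and the limit is its
value there.
-/

open MeasureTheory Filter Real Set Topology


noncomputable section

/-- The threshold `f_N(a) = (σ²/(2β) + a) log N`. -/
def fN (β σ a : ℝ) (N : ℕ) : ℝ := (σ ^ 2 / (2 * β) + a) * Real.log N

/-- `λ(a) = 1 - σ/√(2aβ + σ²)`. -/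
def lam (β σ a : ℝ) : ℝ := 1 - σ / Real.sqrt (2 * a * β + σ ^ 2)

/-- `T_N(a,k) = f_N(a)/β + k √(log N)`. -/
def TN (β σ a : ℝ) (N : ℕ) (k : ℝ) : ℝ := fN β σ a N / β + k * Real.sqrt (Real.log N)

/-- The density of the first hitting time
`τ_i(a,-r) = inf{t > 0 : W_i(t) - (1-λ(a))βt > (1-λ(a))f_N(a) - r}`
of a Brownian motion with standard deviation `σ`:
`g_N(t) = ((1-λ(a))f_N(a) - r)/(√(2π) σ t^{3/2})
  · exp(-((1-λ(a))f_N(a) - r + (1-λ(a))βt)²/(2σ²t))`. -/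
def hittingDensity (β σ a r : ℝ) (N : ℕ) (t : ℝ) : ℝ :=
  ((1 - lam β σ a) * fN β σ a N - r) / (Real.sqrt (2 * π) * σ * t ^ ((3 : ℝ) / 2)) *
    Real.exp (-((1 - lam β σ a) * fN β σ a N - r + (1 - lam β σ a) * β * t) ^ 2 /
      (2 * σ ^ 2 * t))

/-- The first-passage density of `σ W(t) - μ t` through the level `b`. -/
def firstPassageDensity (σ b μ t : ℝ) : ℝ :=
  b / (√(2 * π) * σ * t ^ ((3 : ℝ) / 2)) * exp (-(b + μ * t) ^ 2 / (2 * σ ^ 2 * t))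

theorem sq_rpow_div_two {x : ℝ} (hx : 0 ≤ x) (n : ℕ) : (x ^ 2) ^ ((n : ℝ) / 2) = x ^ n := by
  rw [← rpow_natCast x 2, ← rpow_mul hx, Nat.cast_ofNat, mul_div_cancel₀ _ two_ne_zero,
    rpow_natCast]

section ParabolicBarrier

variable (σ c μ r k : ℝ)

def parabolicProfile (u : ℝ) : ℝ :=
  (c - r * u ^ 2) / (√(2 * π) * σ * (c / μ + k * u) ^ ((3 : ℝ) / 2)) *
    exp ((4 * c * r - μ ^ 2 * k ^ 2 + 2 * μ * k * r * u - r ^ 2 * u ^ 2) /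
      (2 * σ ^ 2 * (c / μ + k * u)))

def parabolicBarrierLimit : ℝ :=
  c / (√(2 * π) * σ * (c / μ) ^ ((3 : ℝ) / 2)) *
    exp ((4 * c * r - μ ^ 2 * k ^ 2) / (2 * σ ^ 2 * (c / μ)))

theorem parabolicProfile_zero : parabolicProfile σ c μ r k 0 = parabolicBarrierLimit σ c μ r k := by
  simp [parabolicProfile, parabolicBarrierLimit]

variable {σ c μ}

theorem continuousAt_parabolicProfile (hσ : σ ≠ 0) (hcμ : 0 < c / μ) :
    ContinuousAt (parabolicProfile σ c μ r k) 0 := by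
  have hp : c / μ + k * 0 ≠ 0 := by simpa using hcμ.ne'
  refine ContinuousAt.mul (ContinuousAt.div (by fun_prop) ?_ ?_) ?_
  · exact continuousAt_const.mul ((by fun_prop : ContinuousAt (fun u => c / μ + k * u) 0).rpow_const
      (Or.inr (by norm_num)))
  · simp only [mul_zero, add_zero]
    positivity
  · exact ContinuousAt.rexp (ContinuousAt.div (by fun_prop) (by fun_prop) (by simpa [hσ] using hp))

theorem exp_mul_firstPassageDensity_parabolic_eq (hσ : σ ≠ 0) (hμ : μ ≠ 0) {x : ℝ} (hx : 0 < x)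
    (hp : 0 < c / μ + k * x⁻¹) :
    exp (2 * c * μ / σ ^ 2 * x ^ 2) * x *
        firstPassageDensity σ (c * x ^ 2 - r) μ (c / μ * x ^ 2 + k * x) =
      parabolicProfile σ c μ r k x⁻¹ := by
  rw [parabolicProfile]
  set p := c / μ + k * x⁻¹
  have ht : c / μ * x ^ 2 + k * x = x ^ 2 * p := by
    simp only [p]; field_simp
  have hpow : (x ^ 2 * p) ^ ((3 : ℝ) / 2) = x ^ 3 * p ^ ((3 : ℝ) / 2) := by
    rw [mul_rpow (sq_nonneg x) hp.le, ← sq_rpow_div_two hx.le 3]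
    norm_num
  have hexp : 2 * c * μ / σ ^ 2 * x ^ 2 + -(c * x ^ 2 - r + μ * (x ^ 2 * p)) ^ 2 /
      (2 * σ ^ 2 * (x ^ 2 * p)) =
      (4 * c * r - μ ^ 2 * k ^ 2 + 2 * μ * k * r * x⁻¹ - r ^ 2 * x⁻¹ ^ 2) / (2 * σ ^ 2 * p) := by
    have hp0 : p ≠ 0 := hp.ne'
    field_simp
    simp only [p]
    field_simp
    ring
  rw [firstPassageDensity, ht, hpow, ← hexp, exp_add]
  field_simp

theorem tendsto_exp_mul_firstPassageDensity_parabolic (hσ : σ ≠ 0) (hc : 0 < c) (hμ : 0 < μ) :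
    Tendsto (fun x => exp (2 * c * μ / σ ^ 2 * x ^ 2) * x *
        firstPassageDensity σ (c * x ^ 2 - r) μ (c / μ * x ^ 2 + k * x)) atTop
      (𝓝 (parabolicBarrierLimit σ c μ r k)) := by
  have hcμ : 0 < c / μ := div_pos hc hμ
  have hprofile := (continuousAt_parabolicProfile r k hσ hcμ).tendsto.comp tendsto_inv_atTop_zero
  have hp : Tendsto (fun x : ℝ => c / μ + k * x⁻¹) atTop (𝓝 (c / μ)) := by
    simpa using tendsto_inv_atTop_zero.const_mul k |>.const_add (c / μ)
  rw [parabolicProfile_zero] at hprofile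
  refine hprofile.congr' ?_
  filter_upwards [eventually_gt_atTop 0, hp.eventually (lt_mem_nhds hcμ)] with x hx hpx
  exact (exp_mul_firstPassageDensity_parabolic_eq r k hσ hμ.ne' hx hpx).symm

end ParabolicBarrier

def barrierCoeff (β σ a : ℝ) : ℝ := (1 - lam β σ a) * (σ ^ 2 / (2 * β) + a)

def driftCoeff (β σ a : ℝ) : ℝ := (1 - lam β σ a) * β

section Coefficients

variable {β σ a : ℝ}

theorem hittingDensity_eq_firstPassageDensity (r : ℝ) (N : ℕ) (t : ℝ) :
    hittingDensity β σ a r N t =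
      firstPassageDensity σ (barrierCoeff β σ a * log N - r) (driftCoeff β σ a) t := by
  simp only [hittingDensity, firstPassageDensity, barrierCoeff, driftCoeff, fN, mul_assoc]

theorem TN_eq_barrierCoeff_div_driftCoeff (h : 1 - lam β σ a ≠ 0) (N : ℕ) (k : ℝ) :
    TN β σ a N k = barrierCoeff β σ a / driftCoeff β σ a * log N + k * √(log N) := by
  rw [TN, fN, barrierCoeff, driftCoeff, mul_div_mul_left _ _ h]
  ring

theorem barrierCoeff_eq (hD : 0 < 2 * a * β + σ ^ 2) (hβ : β ≠ 0) :
    barrierCoeff β σ a = σ * √(2 * a * β + σ ^ 2) / (2 * β) := by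
  have hs := sqrt_pos.2 hD
  have hq : σ ^ 2 / (2 * β) + a = √(2 * a * β + σ ^ 2) ^ 2 / (2 * β) := by
    rw [sq_sqrt hD.le]; field_simp; ring
  rw [barrierCoeff, lam, sub_sub_cancel, hq]
  field_simp

theorem driftCoeff_eq : driftCoeff β σ a = σ * β / √(2 * a * β + σ ^ 2) := by
  rw [driftCoeff, lam, sub_sub_cancel, div_mul_eq_mul_div]

theorem two_mul_barrierCoeff_mul_driftCoeff_div (hD : 0 < 2 * a * β + σ ^ 2) (hβ : β ≠ 0)
    (hσ : σ ≠ 0) : 2 * barrierCoeff β σ a * driftCoeff β σ a / σ ^ 2 = 1 := by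
  have hs := sqrt_pos.2 hD
  rw [barrierCoeff_eq hD hβ, driftCoeff_eq]
  field_simp

theorem parabolicBarrierLimit_barrierCoeff_driftCoeff (hD : 0 < 2 * a * β + σ ^ 2) (hβ : 0 < β)
    (hσ : σ ≠ 0) (r k : ℝ) :
    parabolicBarrierLimit σ (barrierCoeff β σ a) (driftCoeff β σ a) r k =
      β ^ 2 * exp (β *
          (8 * a ^ 2 * β ^ 2 * r - β ^ 3 * k ^ 2 * σ * √(2 * a * β + σ ^ 2)
            + 8 * a * β * r * σ ^ 2 + 2 * r * σ ^ 4) /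
          (σ * (2 * a * β + σ ^ 2) ^ ((5 : ℝ) / 2))) /
        (√π * (2 * a * β + σ ^ 2)) := by
  rw [parabolicBarrierLimit, barrierCoeff_eq hD hβ.ne', driftCoeff_eq]
  set s := √(2 * a * β + σ ^ 2)
  have hs : 0 < s := sqrt_pos.2 hD
  have hs2 : s ^ 2 = 2 * a * β + σ ^ 2 := sq_sqrt hD.le
  have hratio : σ * s / (2 * β) / (σ * β / s) = (s / (√2 * β)) ^ 2 := by
    rw [div_pow, mul_pow, sq_sqrt zero_le_two]
    field_simp
  have h32 : (σ * s / (2 * β) / (σ * β / s)) ^ ((3 : ℝ) / 2) = s ^ 3 / (2 * √2 * β ^ 3) := by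
    have h := sq_rpow_div_two (x := s / (√2 * β)) (by positivity) 3
    push_cast at h
    rw [hratio, h, div_pow, mul_pow, pow_succ √2, sq_sqrt zero_le_two]
  have hexp : (4 * (σ * s / (2 * β)) * r - (σ * β / s) ^ 2 * k ^ 2) /
      (2 * σ ^ 2 * (σ * s / (2 * β) / (σ * β / s))) =
      β * (8 * a ^ 2 * β ^ 2 * r - β ^ 3 * k ^ 2 * σ * s + 8 * a * β * r * σ ^ 2 + 2 * r * σ ^ 4) /
        (σ * (2 * a * β + σ ^ 2) ^ ((5 : ℝ) / 2)) := by
    have h := sq_rpow_div_two hs.le 5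
    push_cast at h
    rw [← hs2, h, show 8 * a ^ 2 * β ^ 2 * r - β ^ 3 * k ^ 2 * σ * s + 8 * a * β * r * σ ^ 2 + 2 * r * σ ^ 4
        = 2 * r * s ^ 2 * s ^ 2 - β ^ 3 * k ^ 2 * σ * s by
      linear_combination (-2 * r * (s ^ 2 + 2 * a * β + σ ^ 2)) * hs2]
    field_simp
    ring
  rw [h32, hexp, sqrt_mul zero_le_two, ← hs2]
  field_simp

end Coefficients

theorem hittingDensity_scaled_limit_general
    (a r β σ : ℝ) (ha : 0 < a) (hβ : 0 < β) (hσ : 0 < σ) (k : ℝ) :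
    Tendsto (fun N : ℕ =>
        (N : ℝ) * Real.sqrt (Real.log N) * hittingDensity β σ a r N (TN β σ a N k))
      atTop
      (𝓝 (β ^ 2 * Real.exp (β *
            (8 * a ^ 2 * β ^ 2 * r - β ^ 3 * k ^ 2 * σ * Real.sqrt (2 * a * β + σ ^ 2)
              + 8 * a * β * r * σ ^ 2 + 2 * r * σ ^ 4) /
            (σ * (2 * a * β + σ ^ 2) ^ ((5 : ℝ) / 2))) /
          (Real.sqrt π * (2 * a * β + σ ^ 2)))) := by
  have hD : 0 < 2 * a * β + σ ^ 2 := by positivity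
  have hc : 0 < barrierCoeff β σ a := by rw [barrierCoeff_eq hD hβ.ne']; positivity
  have hμ : 0 < driftCoeff β σ a := by rw [driftCoeff_eq]; positivity
  have hsqrtLog : Tendsto (fun N : ℕ => √(log N)) atTop atTop :=
    tendsto_sqrt_atTop.comp (tendsto_log_atTop.comp tendsto_natCast_atTop_atTop)
  have hlim := (tendsto_exp_mul_firstPassageDensity_parabolic r k hσ.ne' hc hμ).comp hsqrtLog
  rw [two_mul_barrierCoeff_mul_driftCoeff_div hD hβ.ne' hσ.ne',
    parabolicBarrierLimit_barrierCoeff_driftCoeff hD hβ hσ.ne'] at hlim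
  refine hlim.congr' ?_
  filter_upwards [eventually_ne_atTop 0] with N hN
  have hx : √(log N) ^ 2 = log N := sq_sqrt (log_natCast_nonneg N)
  rw [Function.comp_apply, hx, one_mul, exp_log (by positivity),
    hittingDensity_eq_firstPassageDensity, TN_eq_barrierCoeff_div_driftCoeff (left_ne_zero_of_mul hμ.ne')]

/-- **Convergence of the scaled hitting-time density.** For every `k ∈ ℝ`,
`N √(log N) g_N(T_N(a,k))` converges to
`β² exp(β(8a²β²r - β³k²σ√(2aβ+σ²) + 8aβrσ² + 2rσ⁴)/(σ(2aβ+σ²)^{5/2})) / (√π (2aβ+σ²))`. -/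
theorem hittingDensity_scaled_limit
    (a r β σ σA : ℝ) (ha : 0 < a) (hβ : 0 < β) (hσ : 0 < σ) (hσA : 0 < σA) (k : ℝ) :
    Tendsto (fun N : ℕ =>
        (N : ℝ) * Real.sqrt (Real.log N) * hittingDensity β σ a r N (TN β σ a N k))
      atTop
      (𝓝 (β ^ 2 * Real.exp (β *
            (8 * a ^ 2 * β ^ 2 * r - β ^ 3 * k ^ 2 * σ * Real.sqrt (2 * a * β + σ ^ 2)
              + 8 * a * β * r * σ ^ 2 + 2 * r * σ ^ 4) /
            (σ * (2 * a * β + σ ^ 2) ^ ((5 : ℝ) / 2))) /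
          (Real.sqrt π * (2 * a * β + σ ^ 2)))) :=
  hittingDensity_scaled_limit_general a r β σ ha hβ hσ k

end
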